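/- arXiv:1706.07719 — 2 statements merged into one kernel-verified Lean document; each statement's English description precedes it below -/
import Mathlib

section
/- Let I be a finite index set and for each i ∈ I let P_i and Q_i be probability mass functions on a finite set α_i. Then the squared Hellinger divergence between the product pmfs is subadditive: H²(⊗_{i∈I} P_i ‖ ⊗_{i∈I} Q_i) ≤ ∑_{i∈I} H²(P_i‖Q_i). -/
/-- `p` is a probability mass function on the finite type `α`. -/
def IsPmf {α : Type*} [Fintype α] (p : α → ℝ) : Prop :=
  (∀ a, 0 ≤ p a) ∧ ∑ a, p a = 1

/-- Squared Hellinger divergence between pmfs on a finite type. -/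
noncomputable def hellingerSq {α : Type*} [Fintype α] (p q : α → ℝ) : ℝ :=
  (1 / 2) * ∑ a, (Real.sqrt (p a) - Real.sqrt (q a)) ^ 2

lemma hellingerSq_eq_one_sub {α : Type*} [Fintype α] (p q : α → ℝ)
    (hp : IsPmf p) (hq : IsPmf q) :
    hellingerSq p q = 1 - ∑ a, Real.sqrt (p a) * Real.sqrt (q a) := by
  unfold hellingerSq
  have : ∀ a, (Real.sqrt (p a) - Real.sqrt (q a)) ^ 2
      = p a + q a - 2 * (Real.sqrt (p a) * Real.sqrt (q a)) := by
    intro a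
    have hp' := Real.sq_sqrt (hp.1 a)
    have hq' := Real.sq_sqrt (hq.1 a)
    ring_nf
    nlinarith [hp', hq']
  simp only [this]
  rw [Finset.sum_sub_distrib, Finset.sum_add_distrib, hp.2, hq.2, ← Finset.mul_sum]
  ring

lemma bc_nonneg {α : Type*} [Fintype α] (p q : α → ℝ) :
    0 ≤ ∑ a, Real.sqrt (p a) * Real.sqrt (q a) :=
  Finset.sum_nonneg fun a _ => mul_nonneg (Real.sqrt_nonneg _) (Real.sqrt_nonneg _)

lemma bc_le_one {α : Type*} [Fintype α] (p q : α → ℝ)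
    (hp : IsPmf p) (hq : IsPmf q) :
    ∑ a, Real.sqrt (p a) * Real.sqrt (q a) ≤ 1 := by
  have h : ∀ a ∈ Finset.univ, Real.sqrt (p a) * Real.sqrt (q a) ≤ (p a + q a) / 2 := by
    intro a _
    have hp' := Real.sq_sqrt (hp.1 a)
    have hq' := Real.sq_sqrt (hq.1 a)
    nlinarith [sq_nonneg (Real.sqrt (p a) - Real.sqrt (q a))]
  calc ∑ a, Real.sqrt (p a) * Real.sqrt (q a) ≤ ∑ a, (p a + q a) / 2 :=
        Finset.sum_le_sum h
    _ = 1 := by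
        rw [← Finset.sum_div, Finset.sum_add_distrib, hp.2, hq.2]; norm_num

lemma sqrt_prod' {I : Type*} (s : Finset I) (f : I → ℝ) (hf : ∀ i ∈ s, 0 ≤ f i) :
    Real.sqrt (∏ i ∈ s, f i) = ∏ i ∈ s, Real.sqrt (f i) := by
  induction s using Finset.cons_induction with
  | empty => simp
  | cons a s hx ih =>
    rw [Finset.prod_cons, Finset.prod_cons, Real.sqrt_mul (hf a (Finset.mem_cons_self a s)),
      ih fun i hi => hf i (Finset.mem_cons_of_mem hi)]

lemma one_sub_prod_le {I : Type*} (s : Finset I) (c : I → ℝ)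
    (h0 : ∀ i, 0 ≤ c i) (h1 : ∀ i, c i ≤ 1) :
    1 - ∏ i ∈ s, c i ≤ ∑ i ∈ s, (1 - c i) := by
  induction s using Finset.cons_induction with
  | empty => simp
  | cons a s hx ih =>
    rw [Finset.prod_cons, Finset.sum_cons]
    have hprod : 0 ≤ ∏ i ∈ s, c i := Finset.prod_nonneg fun i _ => h0 i
    have hprod1 : ∏ i ∈ s, c i ≤ 1 := Finset.prod_le_one (fun i _ => h0 i) fun i _ => h1 i
    nlinarith [h0 a, h1 a]

/-- Squared Hellinger divergence between product pmfs is subadditive: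
`H²(⊗ᵢ Pᵢ ‖ ⊗ᵢ Qᵢ) ≤ ∑ᵢ H²(Pᵢ‖Qᵢ)`. -/
theorem hellingerSq_prod_le_sum {I : Type*} [Fintype I] [DecidableEq I]
    {α : I → Type*} [∀ i, Fintype (α i)]
    (P Q : ∀ i, α i → ℝ) (hP : ∀ i, IsPmf (P i)) (hQ : ∀ i, IsPmf (Q i)) :
    hellingerSq (fun x : ∀ i, α i => ∏ i, P i (x i))
        (fun x : ∀ i, α i => ∏ i, Q i (x i)) ≤
      ∑ i, hellingerSq (P i) (Q i) := by
  have hPprod : IsPmf (fun x : ∀ i, α i => ∏ i, P i (x i)) := by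
    constructor
    · intro x; exact Finset.prod_nonneg fun i _ => (hP i).1 (x i)
    · rw [← Fintype.prod_sum (fun i j => P i j)]
      simp [(fun i => (hP i).2)]
  have hQprod : IsPmf (fun x : ∀ i, α i => ∏ i, Q i (x i)) := by
    constructor
    · intro x; exact Finset.prod_nonneg fun i _ => (hQ i).1 (x i)
    · rw [← Fintype.prod_sum (fun i j => Q i j)]
      simp [(fun i => (hQ i).2)]
  rw [hellingerSq_eq_one_sub _ _ hPprod hQprod]
  have key : ∑ x : ∀ i, α i, Real.sqrt (∏ i, P i (x i)) * Real.sqrt (∏ i, Q i (x i))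
      = ∏ i, ∑ a, Real.sqrt (P i a) * Real.sqrt (Q i a) := by
    rw [Fintype.prod_sum (fun i a => Real.sqrt (P i a) * Real.sqrt (Q i a))]
    apply Finset.sum_congr rfl
    intro x _
    rw [sqrt_prod' _ _ (fun i _ => (hP i).1 (x i)),
        sqrt_prod' _ _ (fun i _ => (hQ i).1 (x i)), ← Finset.prod_mul_distrib]
  rw [key]
  calc 1 - ∏ i, ∑ a, Real.sqrt (P i a) * Real.sqrt (Q i a)
      ≤ ∑ i, (1 - ∑ a, Real.sqrt (P i a) * Real.sqrt (Q i a)) :=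
        one_sub_prod_le _ _ (fun i => bc_nonneg _ _)
          (fun i => bc_le_one _ _ (hP i) (hQ i))
    _ = ∑ i, hellingerSq (P i) (Q i) := by
        apply Finset.sum_congr rfl
        intro i _
        rw [hellingerSq_eq_one_sub _ _ (hP i) (hQ i)]
end

section
/- Let p, q, f be pmfs on a finite set α. If H(p‖q) ≥ H(q‖f), then D(p‖f) ≥ 2·(H(p‖q) − H(q‖f))². -/
/-- Hellinger distance between pmfs on a finite type. -/
noncomputable def hellinger {α : Type*} [Fintype α] (p q : α → ℝ) : ℝ :=
  Real.sqrt (hellingerSq p q)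

/-- Kullback–Leibler divergence between pmfs on a finite type, valued in `EReal`:
it is `+∞` unless `p` is absolutely continuous with respect to `q`, in which case it is
`∑ a, p a * log (p a / q a)` (with `0 * log (0/x) = 0`). -/
noncomputable def klDiv {α : Type*} [Fintype α] (p q : α → ℝ) : EReal :=
  if ∀ a, q a = 0 → p a = 0 then ((∑ a, p a * Real.log (p a / q a) : ℝ) : EReal) else ⊤

/-!
The Hellinger distance is, up to the factor `√(1/2)`, the Euclidean distance between the
vectors `√p` and `√q`, so the reverse triangle inequality gives
`|H(p‖q) − H(q‖f)| ≤ H(p‖f)`. It remains to show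
`2 H²(p‖f) ≤ D(p‖f)`: since `H²(p‖f) = 1 − ∑ √(p f)`, this follows by summing the pointwise
bound `2 (x − √(x y)) ≤ x log (x / y)`, which is `log t ≤ t − 1` at `t = √(y / x)`.
-/

open Real

namespace Real

lemma two_mul_sub_sqrt_mul_le_mul_log {x y : ℝ} (hx : 0 ≤ x) (hy : 0 ≤ y) (hxy : y = 0 → x = 0) :
    2 * (x - √(x * y)) ≤ x * log (x / y) := by
  rcases hx.eq_or_lt with rfl | hx_pos
  · simp
  have hy_pos : 0 < y := hy.lt_of_ne fun h => hx_pos.ne' (hxy h.symm)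
  obtain ⟨s, hs, rfl⟩ : ∃ s, 0 < s ∧ s ^ 2 = x := ⟨√x, sqrt_pos.2 hx_pos, sq_sqrt hx⟩
  obtain ⟨t, ht, rfl⟩ : ∃ t, 0 < t ∧ t ^ 2 = y := ⟨√y, sqrt_pos.2 hy_pos, sq_sqrt hy⟩
  have hlog : log (s ^ 2 / t ^ 2) = -2 * log (t / s) := by
    rw [← div_pow, log_pow, ← inv_div, log_inv]
    push_cast
    ring
  have hsqrt : √(s ^ 2 * t ^ 2) = s * t := by
    rw [← mul_pow, sqrt_sq (by positivity)]
  have hts : s ^ 2 * (t / s) = s * t := by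
    field_simp
  rw [hlog, hsqrt]
  nlinarith [log_le_sub_one_of_pos (div_pos ht hs)]

end Real

section Hellinger

variable {α : Type*} [Fintype α]

noncomputable def sqrtVec (p : α → ℝ) : EuclideanSpace ℝ α :=
  WithLp.toLp 2 fun a => √(p a)

lemma hellinger_eq_dist (p q : α → ℝ) :
    hellinger p q = √(1 / 2) * dist (sqrtVec p) (sqrtVec q) := by
  rw [hellinger, hellingerSq, sqrt_mul (by norm_num), EuclideanSpace.dist_eq]
  simp [sqrtVec, Real.dist_eq, sq_abs]

lemma abs_hellinger_sub_hellinger_le (p q f : α → ℝ) :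
    |hellinger p q - hellinger q f| ≤ hellinger p f := by
  simp only [hellinger_eq_dist, ← mul_sub, abs_mul, abs_of_nonneg (sqrt_nonneg _),
    dist_comm (sqrtVec q) (sqrtVec f)]
  exact mul_le_mul_of_nonneg_left (abs_dist_sub_le _ _ _) (sqrt_nonneg _)

lemma hellinger_sq (p q : α → ℝ) : hellinger p q ^ 2 = hellingerSq p q :=
  sq_sqrt (by unfold hellingerSq; positivity)

lemma hellingerSq_eq_one_sub_sum_sqrt_mul {p q : α → ℝ} (hp : IsPmf p) (hq : IsPmf q) :
    hellingerSq p q = 1 - ∑ a, √(p a * q a) := by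
  have hterm : ∀ a, (√(p a) - √(q a)) ^ 2 = p a + q a - 2 * √(p a * q a) := fun a => by
    rw [sub_sq, sq_sqrt (hp.1 a), sq_sqrt (hq.1 a), sqrt_mul (hp.1 a)]
    ring
  simp only [hellingerSq, hterm, Finset.sum_sub_distrib, Finset.sum_add_distrib, ← Finset.mul_sum,
    hp.2, hq.2]
  ring

lemma two_mul_hellingerSq_le_klDiv {p q : α → ℝ} (hp : IsPmf p) (hq : IsPmf q) :
    ((2 * hellingerSq p q : ℝ) : EReal) ≤ klDiv p q := by
  unfold klDiv
  split_ifs with hac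
  · rw [EReal.coe_le_coe_iff]
    calc 2 * hellingerSq p q = ∑ a, 2 * (p a - √(p a * q a)) := by
          rw [hellingerSq_eq_one_sub_sum_sqrt_mul hp hq, ← Finset.mul_sum, Finset.sum_sub_distrib,
            hp.2]
      _ ≤ ∑ a, p a * log (p a / q a) := Finset.sum_le_sum fun a _ =>
          two_mul_sub_sqrt_mul_le_mul_log (hp.1 a) (hq.1 a) (hac a)
  · exact le_top

end Hellinger

theorem klDiv_ge_of_hellinger_far_general {α : Type*} [Fintype α]
    (p q f : α → ℝ) (hp : IsPmf p) (hf : IsPmf f) :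
    ((2 * (hellinger p q - hellinger q f) ^ 2 : ℝ) : EReal) ≤ klDiv p f := by
  have hsq : (hellinger p q - hellinger q f) ^ 2 ≤ hellingerSq p f := by
    obtain ⟨hlower, hupper⟩ := abs_le.1 (abs_hellinger_sub_hellinger_le p q f)
    rw [← hellinger_sq]
    exact sq_le_sq' hlower hupper
  calc ((2 * (hellinger p q - hellinger q f) ^ 2 : ℝ) : EReal)
      ≤ ((2 * hellingerSq p f : ℝ) : EReal) := by exact_mod_cast by linarith
    _ ≤ klDiv p f := two_mul_hellingerSq_le_klDiv hp hf

/-- If `H(p‖q) ≥ H(q‖f)`, then `D(p‖f) ≥ 2·(H(p‖q) − H(q‖f))²`. -/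
theorem klDiv_ge_of_hellinger_far {α : Type*} [Fintype α]
    (p q f : α → ℝ) (hp : IsPmf p) (hq : IsPmf q) (hf : IsPmf f)
    (hfar : hellinger q f ≤ hellinger p q) :
    ((2 * (hellinger p q - hellinger q f) ^ 2 : ℝ) : EReal) ≤ klDiv p f :=
  klDiv_ge_of_hellinger_far_general p q f hp hf
end
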